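/- Let v : ℂ → ℝ be smooth, λ ∈ ℂ∖{0}, and define A(λ) = [[0,1,0],[0,v_z,−(i/λ)e^{−v}],[−e^v,0,0]] and B(λ) = [[0,0,1],[−e^v,0,0],[0,−iλe^{−v},v_{z̄}]]. Then the zero-curvature equation ∂_{z̄}A(λ) − ∂_z B(λ) + [A(λ),B(λ)] = 0 holds for all λ ≠ 0 if and only if v satisfies the Tzitzéica equation v_{zz̄} = e^{−2v} − e^v. -/

import Mathlib

open Complex Matrix

/-- Wirtinger derivative ∂_z = ½(∂_x − i ∂_y) of a function ℂ → ℂ. -/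
noncomputable def Wz (f : ℂ → ℂ) (p : ℂ) : ℂ :=
  (fderiv ℝ f p 1 - Complex.I * fderiv ℝ f p Complex.I) / 2

/-- Wirtinger derivative ∂_z̄ = ½(∂_x + i ∂_y) of a function ℂ → ℂ. -/
noncomputable def Wzb (f : ℂ → ℂ) (p : ℂ) : ℂ :=
  (fderiv ℝ f p 1 + Complex.I * fderiv ℝ f p Complex.I) / 2

lemma Wz_const (c p : ℂ) : Wz (fun _ => c) p = 0 := by
  simp [Wz]

lemma Wzb_const (c p : ℂ) : Wzb (fun _ => c) p = 0 := by
  simp [Wzb]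

lemma Wz_neg (f : ℂ → ℂ) (p : ℂ) : Wz (fun q => -f q) p = -Wz f p := by
  simp [Wz, fderiv_neg]; ring

lemma Wzb_neg (f : ℂ → ℂ) (p : ℂ) : Wzb (fun q => -f q) p = -Wzb f p := by
  simp [Wzb, fderiv_neg]; ring

lemma Wz_const_mul (c : ℂ) {f : ℂ → ℂ} {p : ℂ} (hf : DifferentiableAt ℝ f p) :
    Wz (fun q => c * f q) p = c * Wz f p := by
  simp [Wz, fderiv_const_mul hf c, smul_eq_mul]; ring

lemma Wzb_const_mul (c : ℂ) {f : ℂ → ℂ} {p : ℂ} (hf : DifferentiableAt ℝ f p) :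
    Wzb (fun q => c * f q) p = c * Wzb f p := by
  simp [Wzb, fderiv_const_mul hf c, smul_eq_mul]; ring

lemma Wz_cexp {f : ℂ → ℂ} {p : ℂ} (hf : DifferentiableAt ℝ f p) :
    Wz (fun q => Complex.exp (f q)) p = Complex.exp (f p) * Wz f p := by
  rw [Wz, Wz, hf.hasFDerivAt.cexp.fderiv]
  simp [smul_eq_mul]; ring

lemma Wzb_cexp {f : ℂ → ℂ} {p : ℂ} (hf : DifferentiableAt ℝ f p) :
    Wzb (fun q => Complex.exp (f q)) p = Complex.exp (f p) * Wzb f p := by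
  rw [Wzb, Wzb, hf.hasFDerivAt.cexp.fderiv]
  simp [smul_eq_mul]; ring

lemma Wz_Wzb_comm {f : ℂ → ℂ} (hf : ContDiff ℝ (⊤ : ℕ∞) f) (p : ℂ) :
    Wz (Wzb f) p = Wzb (Wz f) p := by
  have hF : Differentiable ℝ (fderiv ℝ f) :=
    (hf.fderiv_right (m := (⊤ : ℕ∞)) (by simp)).differentiable (by simp)
  have h1 : ∀ w q, DifferentiableAt ℝ (fun y => fderiv ℝ f y w) q :=
    fun w q => (hF q).clm_apply (differentiableAt_const w)
  have hD : ∀ w u, fderiv ℝ (fun q => fderiv ℝ f q w) p u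
      = fderiv ℝ (fderiv ℝ f) p u w := by
    intro w u
    rw [fderiv_clm_apply (hF p) (differentiableAt_const w)]
    simp
  have hsym : fderiv ℝ (fderiv ℝ f) p 1 Complex.I
      = fderiv ℝ (fderiv ℝ f) p Complex.I 1 :=
    ((hf.contDiffAt).of_le (by exact WithTop.coe_le_coe.mpr le_top : (2:WithTop ℕ∞) ≤ ((⊤ : ℕ∞) : WithTop ℕ∞))).isSymmSndFDerivAt (by simp) 1 Complex.I
  have eWzb : ∀ u, fderiv ℝ (Wzb f) p u =
      (fderiv ℝ (fderiv ℝ f) p u 1 + Complex.I * fderiv ℝ (fderiv ℝ f) p u Complex.I) / 2 := by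
    intro u
    have h : Wzb f = fun q => (fderiv ℝ f q 1 + Complex.I * fderiv ℝ f q Complex.I) / 2 := rfl
    rw [h]
    simp only [div_eq_inv_mul]
    rw [fderiv_const_mul (show DifferentiableAt ℝ (fun y => fderiv ℝ f y 1 + Complex.I * fderiv ℝ f y Complex.I) p from (h1 1 p).add ((h1 Complex.I p).const_mul Complex.I)) _,
        fderiv_fun_add (h1 1 p) ((h1 Complex.I p).const_mul Complex.I),
        fderiv_const_mul (h1 Complex.I p) Complex.I]
    simp [hD]; ring
  have eWz : ∀ u, fderiv ℝ (Wz f) p u =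
      (fderiv ℝ (fderiv ℝ f) p u 1 - Complex.I * fderiv ℝ (fderiv ℝ f) p u Complex.I) / 2 := by
    intro u
    have h : Wz f = fun q => (fderiv ℝ f q 1 - Complex.I * fderiv ℝ f q Complex.I) / 2 := rfl
    rw [h]
    simp only [div_eq_inv_mul]
    rw [fderiv_const_mul (show DifferentiableAt ℝ (fun y => fderiv ℝ f y 1 - Complex.I * fderiv ℝ f y Complex.I) p from (h1 1 p).sub ((h1 Complex.I p).const_mul Complex.I)) _,
        fderiv_fun_sub (h1 1 p) ((h1 Complex.I p).const_mul Complex.I),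
        fderiv_const_mul (h1 Complex.I p) Complex.I]
    simp [hD]
  rw [Wz, Wzb, eWzb, eWzb, eWz, eWz, hsym]
  ring
/-- The Lax matrix A(λ) of the Tzitzéica system. -/
noncomputable def laxA (v : ℂ → ℝ) (lam : ℂ) (p : ℂ) : Matrix (Fin 3) (Fin 3) ℂ :=
  !![0, 1, 0;
     0, Wz (fun q => (v q : ℂ)) p, -(Complex.I / lam) * Real.exp (-(v p));
     -(Real.exp (v p) : ℂ), 0, 0]

/-- The Lax matrix B(λ) of the Tzitzéica system. -/
noncomputable def laxB (v : ℂ → ℝ) (lam : ℂ) (p : ℂ) : Matrix (Fin 3) (Fin 3) ℂ :=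
  !![0, 0, 1;
     -(Real.exp (v p) : ℂ), 0, 0;
     0, -(Complex.I * lam) * Real.exp (-(v p)), Wzb (fun q => (v q : ℂ)) p]

/-- the zero-curvature equation ∂_z̄ A(λ) − ∂_z B(λ) + [A(λ),B(λ)] = 0
holds for all λ ≠ 0 iff v satisfies the Tzitzéica equation v_{zz̄} = e^{−2v} − e^v. -/
theorem zero_curvature_iff_tzitzeica (v : ℂ → ℝ) (hv : ContDiff ℝ (⊤ : ℕ∞) fun p => (v p : ℂ)) :
    (∀ lam : ℂ, lam ≠ 0 → ∀ p : ℂ, ∀ i j : Fin 3,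
      Wzb (fun q => laxA v lam q i j) p - Wz (fun q => laxB v lam q i j) p +
        (laxA v lam p * laxB v lam p - laxB v lam p * laxA v lam p) i j = 0) ↔
    (∀ p : ℂ, Wzb (Wz fun q => (v q : ℂ)) p =
      Real.exp (-2 * v p) - Real.exp (v p)) := by
  have hfd : Differentiable ℝ fun q => ((v q : ℂ)) := hv.differentiable (by simp)
  have hEp : ∀ p, Wz (fun q => cexp ((v q : ℂ))) p = cexp ((v p : ℂ)) * Wz (fun q => ((v q : ℂ))) p :=
    fun p => Wz_cexp (hfd p)
  have hEpb : ∀ p, Wzb (fun q => cexp ((v q : ℂ))) p = cexp ((v p : ℂ)) * Wzb (fun q => ((v q : ℂ))) p :=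
    fun p => Wzb_cexp (hfd p)
  have hEm : ∀ p, Wz (fun q => cexp (-(v q : ℂ))) p = -(cexp (-(v p : ℂ)) * Wz (fun q => ((v q : ℂ))) p) := by
    intro p
    rw [Wz_cexp (show DifferentiableAt ℝ (fun q => -((v q : ℂ))) p from (hfd p).neg), Wz_neg]
    ring
  have hEmb : ∀ p, Wzb (fun q => cexp (-(v q : ℂ))) p = -(cexp (-(v p : ℂ)) * Wzb (fun q => ((v q : ℂ))) p) := by
    intro p
    rw [Wzb_cexp (show DifferentiableAt ℝ (fun q => -((v q : ℂ))) p from (hfd p).neg), Wzb_neg]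
    ring
  have he2 : ∀ p, cexp (-2 * (v p : ℂ)) = cexp (-(v p : ℂ)) * cexp (-(v p : ℂ)) := by
    intro p
    rw [← Complex.exp_add]
    congr 1
    ring
  constructor
  · intro h p
    have key := h 1 one_ne_zero p 1 1
    simp [laxA, laxB, Matrix.mul_apply, Fin.sum_univ_three, Wz_const, Wzb_const] at key
    push_cast
    linear_combination key - he2 p - cexp (-(v p : ℂ)) * cexp (-(v p : ℂ)) * Complex.I_mul_I
  · intro h lam hlam p i j
    have hIa : ∀ a : ℂ, Complex.I / lam * a * (Complex.I * lam * a) = -(a * a) := by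
      intro a
      field_simp
      linear_combination (a * a) * Complex.I_mul_I
    have hIb : ∀ a : ℂ, Complex.I * lam * a * (Complex.I / lam * a) = -(a * a) := by
      intro a
      field_simp
      linear_combination (a * a) * Complex.I_mul_I
    fin_cases i <;> fin_cases j <;>
      simp [laxA, laxB, Matrix.mul_apply, Fin.sum_univ_three, Wz_const, Wzb_const]
    · rw [Wz_neg, hEp p]; ring
    · have hp := h p
      push_cast at hp
      rw [show Wzb (fun q => Wz (fun q => ((v q : ℂ))) q) p
            = Wzb (Wz fun q => ((v q : ℂ))) p from rfl, hp, hIa, he2 p]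
      ring
    · rw [show (fun q => -(Complex.I / lam * cexp (-((v q : ℂ)))))
            = fun q => (-(Complex.I / lam)) * cexp (-((v q : ℂ))) from by funext q; ring,
          Wzb_const_mul _ (show DifferentiableAt ℝ (fun q => -((v q : ℂ))) p from (hfd p).neg).cexp, hEmb p]
      ring
    · rw [Wzb_neg, hEpb p]; ring
    · rw [show (fun q => -(Complex.I * lam * cexp (-((v q : ℂ)))))
            = fun q => (-(Complex.I * lam)) * cexp (-((v q : ℂ))) from by funext q; ring,
          Wz_const_mul _ (show DifferentiableAt ℝ (fun q => -((v q : ℂ))) p from (hfd p).neg).cexp, hEm p]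
      ring
    · have hp := h p
      push_cast at hp
      rw [show Wz (fun q => Wzb (fun q => ((v q : ℂ))) q) p
            = Wz (Wzb fun q => ((v q : ℂ))) p from rfl,
          Wz_Wzb_comm hv p, hp, he2 p, hIb]
      ring
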